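/- Let G_T be a G-system at t₀, G_t ∈ G_T, and J ⊆ G_{t₀}. If J is G_t-mutation-reachable (i.e., there exists G_u ∈ G_T with J ⊆ G_u and G_u obtainable from G_t by a finite sequence of mutations), then the co-Bongartz completion T_J(G_t) is also obtainable from G_t by a finite sequence of mutations. -/

import Mathlib

/-- A `G`-system at `t₀` (Definition 5.1.1): a collection of ℤ-bases of ℤⁿ, indexed by `T`,
satisfying the Mutation Condition, the Co-Bongartz Completion Condition and the
Uniqueness Condition. -/
structure GSystem (n : ℕ) (T : Type) (t₀ : T) where
  g : T → Fin n → (Fin n → ℤ)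
  indep : ∀ t, LinearIndependent ℤ (g t)
  span : ∀ t, Submodule.span ℤ (Set.range (g t)) = ⊤
  mutation : ∀ (t : T) (k : Fin n), ∃ t₁ : T,
    Set.range (g t) ∩ Set.range (g t₁) = Set.range (g t) \ {g t k}
  coBongartz : ∀ (t : T) (J : Set (Fin n → ℤ)), J ⊆ Set.range (g t₀) →
    ∃ t' : T, J ⊆ Set.range (g t') ∧
      ∀ (k : Fin n) (r : Fin n → ℤ), g t k = ∑ i, r i • g t' i →
        ∀ i, g t' i ∉ J → 0 ≤ r i
  uniqueness : ∀ (u v : T) (I I' : Finset (Fin n)) (r r' : Fin n → ℤ),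
    (∀ i ∈ I, 0 < r i) → (∀ j ∈ I', 0 < r' j) →
    (∑ i ∈ I, r i • g u i) = (∑ j ∈ I', r' j • g v j) →
    ∃ σ : Fin n → Fin n, Set.BijOn σ ↑I' ↑I ∧
      ∀ j ∈ I', r' j = r (σ j) ∧ g v j = g u (σ j)

/-- `G_{t'}` is a co-Bongartz completion of `J` with respect to `G_t`
(conditions (a) and (b) of Proposition-Definition 5.1.4). -/
def GSystem.IsCoB {n : ℕ} {T : Type} {t₀ : T} (S : GSystem n T t₀)
    (J : Set (Fin n → ℤ)) (t t' : T) : Prop :=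
  J ⊆ Set.range (S.g t') ∧
  ∀ (k : Fin n) (r : Fin n → ℤ), S.g t k = ∑ i, r i • S.g t' i →
    ∀ i, S.g t' i ∉ J → 0 ≤ r i

/-- `G_{t'}` is the mutation of `G_t` at `g_{k;t}`, i.e.
`G_t ∩ G_{t'} = G_t \ {g_{k;t}}` (Proposition-Definition 5.1.3). -/
def GSystem.IsMutationAt {n : ℕ} {T : Type} {t₀ : T} (S : GSystem n T t₀)
    (t t' : T) (k : Fin n) : Prop :=
  Set.range (S.g t) ∩ Set.range (S.g t') = Set.range (S.g t) \ {S.g t k}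

/-- A single step between bases of the `G`-system: either they are equal as
sets (identified bases) or one is a mutation of the other. -/
def GSystem.Step {n : ℕ} {T : Type} {t₀ : T} (S : GSystem n T t₀) (a b : T) : Prop :=
  Set.range (S.g a) = Set.range (S.g b) ∨ ∃ k : Fin n, S.IsMutationAt a b k

/-!
A vector lying in two bases `G_a`, `G_b` of the system expands in the co-Bongartz completions
`T_J(G_a)` and `T_J(G_b)` with coefficients that are nonnegative off `J`. Since `J` lies in both
completions, the negative parts can be moved across, and the Uniqueness Condition then forces every
vector of `T_J(G_a)` used in the expansion to lie in `T_J(G_b)`. Hence `G_a ∩ G_b` is a linearly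
independent subset of the span of `T_J(G_a) ∩ T_J(G_b)`, so `|G_a ∩ G_b| ≤ |T_J(G_a) ∩ T_J(G_b)|`,
and a mutation between `G_a` and `G_b` yields at most one between their completions
(Theorem 5.2.1). Walking along the mutation path from `G_t` to `G_u ⊇ J` links `T_J(G_t)` to
`T_J(G_u) = G_u`; reversing that path shows that `T_J(G_t)` is reachable from `G_t`.
-/

open Set Submodule

theorem Set.ncard_le_ncard_of_subset_span {R M : Type*} [Ring R] [StrongRankCondition R]
    [AddCommGroup M] [Module R M] {s w : Set M} (hs : LinearIndepOn R id s) (hw : w.Finite)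
    (h : s ⊆ span R w) : s.ncard ≤ w.ncard := by
  have := hw.fintype
  have hsw : range (Subtype.val : s → M) ≤ span R w := by rwa [Subtype.range_coe]
  have hfin : s.Finite := hs.linearIndependent.finite_of_le_span_finite _ w hsw
  have := hfin.fintype
  have hcard := linearIndependent_le_span' _ hs.linearIndependent w hsw
  rw [Cardinal.mk_fintype, Nat.cast_le] at hcard
  rwa [ncard_eq_toFinset_card', ncard_eq_toFinset_card', toFinset_card, toFinset_card]

theorem AddSubmonoid.sum_smul_mem_closure {M ι : Type*} [AddCommGroup M] [Fintype ι]
    {s : Set M} {v : ι → M} {m : ι → ℤ} (hm : ∀ i, 0 ≤ m i) (hv : ∀ i, m i ≠ 0 → v i ∈ s) :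
    ∑ i, m i • v i ∈ AddSubmonoid.closure s := by
  refine AddSubmonoid.sum_mem _ fun i _ => ?_
  obtain ⟨k, hk⟩ := Int.eq_ofNat_of_zero_le (hm i)
  rcases eq_or_ne (m i) 0 with h0 | h0
  · simp [h0]
  · rw [hk, natCast_zsmul]
    exact AddSubmonoid.nsmul_mem _ (AddSubmonoid.subset_closure (hv i h0)) k

namespace GSystem

variable {n : ℕ} {T : Type} {t₀ : T} (S : GSystem n T t₀)

noncomputable def basis (t : T) : Module.Basis (Fin n) ℤ (Fin n → ℤ) :=
  Module.Basis.mk (S.indep t) (S.span t).ge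

lemma basis_apply (t : T) (i : Fin n) : S.basis t i = S.g t i := by
  simp [basis]

lemma sum_repr (t : T) (y : Fin n → ℤ) : ∑ i, (S.basis t).repr y i • S.g t i = y := by
  simpa only [basis_apply] using (S.basis t).sum_repr y

lemma repr_eq_of_eq_sum {t : T} {y r : Fin n → ℤ} (h : y = ∑ i, r i • S.g t i) (i : Fin n) :
    (S.basis t).repr y i = r i := by
  simp only [h, ← S.basis_apply, Module.Basis.repr_sum_self]

lemma ncard_range (t : T) : (range (S.g t)).ncard = n := by
  rw [← Nat.card_coe_set_eq, Nat.card_range_of_injective (S.indep t).injective,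
    Nat.card_eq_fintype_card, Fintype.card_fin]

lemma linearIndepOn_range (t : T) : LinearIndepOn ℤ id (range (S.g t)) :=
  (linearIndepOn_id_range_iff (S.indep t).injective).2 (S.indep t)

lemma isCoB_iff {J : Set (Fin n → ℤ)} {t t' : T} :
    S.IsCoB J t t' ↔ J ⊆ range (S.g t') ∧
      ∀ k i, S.g t' i ∉ J → 0 ≤ (S.basis t').repr (S.g t k) i := by
  refine and_congr_right fun _ => ⟨fun h k i hi => h k _ (S.sum_repr t' _).symm i hi,
    fun h k r hr i hi => ?_⟩
  rw [← S.repr_eq_of_eq_sum hr]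
  exact h k i hi

lemma isCoB_self {J : Set (Fin n → ℤ)} {u : T} (h : J ⊆ range (S.g u)) : S.IsCoB J u u := by
  refine S.isCoB_iff.2 ⟨h, fun k i _ => ?_⟩
  rw [← S.basis_apply, Module.Basis.repr_self]
  exact Finsupp.single_nonneg.2 zero_le_one i

lemma repr_nonneg_of_mem_closure {t : T} {y : Fin n → ℤ}
    (hy : y ∈ AddSubmonoid.closure (range (S.g t))) (i : Fin n) :
    0 ≤ (S.basis t).repr y i := by
  induction hy using AddSubmonoid.closure_induction with
  | mem x hx =>
    obtain ⟨j, rfl⟩ := hx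
    rw [← S.basis_apply, Module.Basis.repr_self]
    exact Finsupp.single_nonneg.2 zero_le_one i
  | zero => simp
  | add x y _ _ hx hy => simpa using add_nonneg hx hy

lemma mem_range_of_repr_pos {a b : T} {y : Fin n → ℤ} (ha : ∀ i, 0 ≤ (S.basis a).repr y i)
    (hb : ∀ j, 0 ≤ (S.basis b).repr y j) {i : Fin n} (hi : 0 < (S.basis a).repr y i) :
    S.g a i ∈ range (S.g b) := by
  classical
  have sum_support : ∀ t : T, (∀ j, 0 ≤ (S.basis t).repr y j) →
      ∑ j ∈ Finset.univ.filter (fun j => 0 < (S.basis t).repr y j),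
        (S.basis t).repr y j • S.g t j = y := fun t ht => by
    rw [Finset.sum_filter_of_ne fun j _ hj => (ht j).lt_of_ne' (left_ne_zero_of_smul hj)]
    exact S.sum_repr t y
  obtain ⟨σ, hσ, hσg⟩ := S.uniqueness a b _ _ _ _ (fun _ hj => (Finset.mem_filter.1 hj).2)
    (fun _ hj => (Finset.mem_filter.1 hj).2) ((sum_support a ha).trans (sum_support b hb).symm)
  obtain ⟨j, hj, rfl⟩ := hσ.surjOn (by simpa using hi)
  exact ⟨j, (hσg j hj).2⟩

lemma le_repr_add_sum_neg_part {J : Set (Fin n → ℤ)} {a : T} (hJa : J ⊆ range (S.g a))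
    {x p : Fin n → ℤ} (hp : p ∈ AddSubmonoid.closure J) (i : Fin n) :
    max ((S.basis a).repr x i) 0 ≤
      (S.basis a).repr (x + ∑ j, max (-(S.basis a).repr x j) 0 • S.g a j + p) i := by
  have hp' := S.repr_nonneg_of_mem_closure (AddSubmonoid.closure_mono hJa hp) i
  simp only [← S.basis_apply, map_add, Module.Basis.repr_sum_self, Finsupp.add_apply]
  omega

lemma sum_neg_part_mem_closure {J : Set (Fin n → ℤ)} {a : T} {x : Fin n → ℤ}
    (hx : ∀ i, S.g a i ∉ J → 0 ≤ (S.basis a).repr x i) :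
    ∑ j, max (-(S.basis a).repr x j) 0 • S.g a j ∈ AddSubmonoid.closure J :=
  AddSubmonoid.sum_smul_mem_closure (fun _ => le_max_right _ _) fun j hj => by
    by_contra hjJ
    have := hx j hjJ
    omega

lemma mem_range_of_repr_ne_zero {J : Set (Fin n → ℤ)} {a b : T} (hJa : J ⊆ range (S.g a))
    (hJb : J ⊆ range (S.g b)) {x : Fin n → ℤ}
    (ha : ∀ i, S.g a i ∉ J → 0 ≤ (S.basis a).repr x i)
    (hb : ∀ j, S.g b j ∉ J → 0 ≤ (S.basis b).repr x j)
    {i : Fin n} (hi : (S.basis a).repr x i ≠ 0) (hiJ : S.g a i ∉ J) :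
    S.g a i ∈ range (S.g b) := by
  -- The negative coordinates of `x` sit on `J`, which lies in both bases; adding them back gives
  -- a vector with nonnegative coordinates in both bases, to which uniqueness applies.
  have hya := S.le_repr_add_sum_neg_part hJa (x := x) (S.sum_neg_part_mem_closure hb)
  have hyb := S.le_repr_add_sum_neg_part hJb (x := x) (S.sum_neg_part_mem_closure ha)
  rw [add_right_comm] at hyb
  refine S.mem_range_of_repr_pos (fun j => (le_max_right _ _).trans (hya j))
    (fun j => (le_max_right _ _).trans (hyb j)) ?_
  have := ha i hiJ
  exact lt_of_lt_of_le (by omega) (hya i)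

lemma range_inter_subset_span_inter {J : Set (Fin n → ℤ)} {a b w w' : T}
    (hw : S.IsCoB J a w) (hw' : S.IsCoB J b w') :
    range (S.g a) ∩ range (S.g b) ⊆ Submodule.span ℤ (range (S.g w) ∩ range (S.g w')) := by
  rintro _ ⟨⟨k, rfl⟩, k', hk'⟩
  obtain ⟨hJw, hw⟩ := S.isCoB_iff.1 hw
  obtain ⟨hJw', hw'⟩ := S.isCoB_iff.1 hw'
  rw [← S.sum_repr w (S.g a k)]
  refine Submodule.sum_mem _ fun l _ => ?_
  by_cases hl : S.g w l ∈ range (S.g w')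
  · exact Submodule.smul_mem _ _ (subset_span ⟨⟨l, rfl⟩, hl⟩)
  · have hzero : (S.basis w).repr (S.g a k) l = 0 := by
      by_contra hne
      refine hl (S.mem_range_of_repr_ne_zero hJw hJw' (hw k) (fun j hj => ?_) hne
        fun h => hl (hJw' h))
      rw [← hk']
      exact hw' k' j hj
    simp [hzero]

lemma le_ncard_inter_of_step {a b : T} (h : S.Step a b) :
    n - 1 ≤ (range (S.g a) ∩ range (S.g b)).ncard := by
  rcases h with h | ⟨k, h⟩
  · rw [h, inter_self, S.ncard_range]
    exact Nat.sub_le n 1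
  · rw [h, ncard_sdiff_singleton_of_mem (mem_range_self k), S.ncard_range]

lemma step_of_le_ncard_inter {w w' : T} (h : n - 1 ≤ (range (S.g w) ∩ range (S.g w')).ncard) :
    S.Step w w' := by
  have hle : (range (S.g w) ∩ range (S.g w')).ncard ≤ n :=
    (ncard_le_ncard inter_subset_left (finite_range _)).trans (S.ncard_range w).le
  rcases hle.eq_or_lt with heq | hlt
  · have hsub : range (S.g w) ⊆ range (S.g w') := by
      rw [← eq_of_subset_of_ncard_le inter_subset_left (by rw [heq, S.ncard_range])
        (finite_range _)]
      exact inter_subset_right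
    exact Or.inl (eq_of_subset_of_ncard_le hsub (by rw [S.ncard_range, S.ncard_range])
      (finite_range _))
  · have hdiff : (range (S.g w) \ (range (S.g w) ∩ range (S.g w'))).ncard = 1 := by
      rw [ncard_sdiff inter_subset_left ((finite_range _).inter_of_left _), S.ncard_range]
      omega
    obtain ⟨x, hx⟩ := ncard_eq_one.1 hdiff
    obtain ⟨⟨l, rfl⟩, -⟩ : x ∈ range (S.g w) \ (range (S.g w) ∩ range (S.g w')) :=
      hx ▸ mem_singleton x
    refine Or.inr ⟨l, ?_⟩
    rw [IsMutationAt, ← hx, sdiff_sdiff_cancel_left inter_subset_left]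

instance : Std.Symm S.Step where
  symm a _ h :=
    S.step_of_le_ncard_inter (inter_comm (range (S.g a)) _ ▸ S.le_ncard_inter_of_step h)

/-- Theorem 5.2.1. -/
lemma step_of_isCoB {J : Set (Fin n → ℤ)} {a b w w' : T} (hab : S.Step a b)
    (hw : S.IsCoB J a w) (hw' : S.IsCoB J b w') : S.Step w w' :=
  S.step_of_le_ncard_inter <| (S.le_ncard_inter_of_step hab).trans <|
    ncard_le_ncard_of_subset_span ((S.linearIndepOn_range a).mono inter_subset_left)
      ((finite_range _).inter_of_left _) (S.range_inter_subset_span_inter hw hw')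

lemma reflTransGen_of_isCoB {J : Set (Fin n → ℤ)} (hJ : J ⊆ range (S.g t₀)) {t u w w' : T}
    (htu : Relation.ReflTransGen S.Step t u) (hw : S.IsCoB J t w) (hw' : S.IsCoB J u w') :
    Relation.ReflTransGen S.Step w w' := by
  induction htu generalizing w' with
  | refl => exact .single (S.step_of_isCoB (Or.inl rfl) hw hw')
  | @tail b c _ hbc ih =>
    obtain ⟨wb, hwb⟩ := S.coBongartz b J hJ
    exact (ih hwb).tail (S.step_of_isCoB hbc hwb hw')

end GSystem

/-- Theorem 5.2.2: if `J ⊆ G_{t₀}` is `G_t`-mutation-reachable (there is a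
basis `G_u` of the system containing `J` obtained from `G_t` by a finite
sequence of mutations), then the co-Bongartz completion `T_J(G_t)` is also
obtainable from `G_t` by a finite sequence of mutations. -/
theorem stmt16 {n : ℕ} {T : Type} {t₀ : T} (S : GSystem n T t₀) (t : T)
    (J : Set (Fin n → ℤ)) (hJ : J ⊆ Set.range (S.g t₀))
    (hreach : ∃ u : T, J ⊆ Set.range (S.g u) ∧ Relation.ReflTransGen S.Step t u)
    (t' : T) (ht' : S.IsCoB J t t') :
    ∃ v : T, Relation.ReflTransGen S.Step t v ∧
      Set.range (S.g v) = Set.range (S.g t') := by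
  obtain ⟨u, hJu, htu⟩ := hreach
  have hut' : Relation.ReflTransGen S.Step u t' :=
    Std.Symm.symm _ _ (S.reflTransGen_of_isCoB hJ htu ht' (S.isCoB_self hJu))
  exact ⟨t', htu.trans hut', rfl⟩
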